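/- For every m ≥ 3, the crown graph J_{2m} (K_{m,m} minus a perfect matching) admits a total colouring with m colours in which, on each side of the bipartition {x₁,…,x_m}, {y₁,…,y_m} with x_k not adjacent to y_k, the vertex colours satisfy: h(x_k) = h(x_t) iff k = t, h(y_k) = h(y_t) iff k = t, and h(x_k) = h(y_t) iff k = t. -/

import Mathlib

open SimpleGraph

variable {V : Type*} {W : Type*}

/-- The direct (tensor) product of two simple graphs. -/
def tensorProd (G : SimpleGraph V) (H : SimpleGraph W) : SimpleGraph (V × W) where
  Adj a b := G.Adj a.1 b.1 ∧ H.Adj a.2 b.2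
  symm := ⟨fun _ _ h => ⟨G.adj_symm h.1, H.adj_symm h.2⟩⟩
  loopless := ⟨fun a h => G.irrefl h.1⟩

instance tensorProd.adjDecidable (G : SimpleGraph V) (H : SimpleGraph W)
    [DecidableRel G.Adj] [DecidableRel H.Adj] : DecidableRel (tensorProd G H).Adj :=
  fun _ _ => instDecidableAnd

/-- A proper edge colouring with `n` colours, given as a symmetric function on adjacent pairs. -/
def IsEdgeColoring (G : SimpleGraph V) (n : ℕ) (ce : V → V → Fin n) : Prop :=
  (∀ u v, G.Adj u v → ce u v = ce v u) ∧
  (∀ u v w, G.Adj u v → G.Adj u w → v ≠ w → ce u v ≠ ce u w)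

/-- A proper total colouring with `n` colours. -/
def IsTotalColoring (G : SimpleGraph V) (n : ℕ) (cv : V → Fin n) (ce : V → V → Fin n) : Prop :=
  (∀ u v, G.Adj u v → ce u v = ce v u) ∧
  (∀ u v, G.Adj u v → cv u ≠ cv v) ∧
  (∀ u v w, G.Adj u v → G.Adj u w → v ≠ w → ce u v ≠ ce u w) ∧
  (∀ u v, G.Adj u v → ce u v ≠ cv u ∧ ce u v ≠ cv v)

/-- The total chromatic number of a graph. -/
noncomputable def totalChromaticNumber (G : SimpleGraph V) : ℕ :=
  sInf {n | ∃ cv ce, IsTotalColoring G n cv ce}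

/-- Adjacency of the crown graph. -/
def crownAdj {m : ℕ} : Fin m ⊕ Fin m → Fin m ⊕ Fin m → Prop
  | Sum.inl k, Sum.inr t => k ≠ t
  | Sum.inr k, Sum.inl t => k ≠ t
  | _, _ => False

/-- The crown graph `J_{2m}`: `K_{m,m}` minus a perfect matching. -/
def crown (m : ℕ) : SimpleGraph (Fin m ⊕ Fin m) where
  Adj := crownAdj
  symm := ⟨by rintro (k|k) (t|t) h <;> simp only [crownAdj] at * <;> exact fun e => h e.symm⟩
  loopless := ⟨by rintro (k|k) h <;> simp only [crownAdj] at h⟩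

instance crown.adjDecidable (m : ℕ) : DecidableRel (crown m).Adj := fun a b =>
  match a, b with
  | Sum.inl k, Sum.inr t => (inferInstance : Decidable (k ≠ t))
  | Sum.inr k, Sum.inl t => (inferInstance : Decidable (k ≠ t))
  | Sum.inl _, Sum.inl _ => isFalse (fun h => h)
  | Sum.inr _, Sum.inr _ => isFalse (fun h => h)

/-! Colour both `x_k` and `y_k` with `k`, and the edge `x_k y_t` with `L k t` for a Latin square
`L` on the `m` colours. Since rows and columns of `L` are permutations, the edges get a proper
colouring, and the edge `x_k y_t` avoids the colours `k` and `t` exactly because `L` is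
idempotent: `L k t = k = L k k` would force `t = k`. Idempotent Latin squares exist for every
`m ≠ 2`: for odd `m` take `(a + b) / 2` in `ZMod m`; for even `m` prolong the square of odd
order `m - 1` along its transversal `{(a, a + 1)}`, whose symbols `a + 1/2` are all distinct. -/

open Function

variable {α β : Type*}

structure IsIdempotentLatinSquare (L : α → α → α) : Prop where
  injective_row : ∀ a, Injective (L a)
  injective_col : ∀ b, Injective fun a => L a b
  idem : ∀ a, L a a = a

/-- Prolongation along the transversal `{(a, σ a)}`: its symbols move to the new row and column,
and the new symbol `none` takes their place. -/
def latinProlong [DecidableEq α] (L : α → α → α) (σ : Equiv.Perm α) :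
    Option α → Option α → Option α
  | some a, some b => if b = σ a then none else some (L a b)
  | some a, none => some (L a (σ a))
  | none, some b => some (L (σ.symm b) b)
  | none, none => none

namespace IsIdempotentLatinSquare

variable {L : α → α → α}

theorem equiv_conj (hL : IsIdempotentLatinSquare L) (e : α ≃ β) :
    IsIdempotentLatinSquare fun a b => e (L (e.symm a) (e.symm b)) where
  injective_row a := e.injective.comp ((hL.injective_row _).comp e.symm.injective)
  injective_col b := e.injective.comp ((hL.injective_col _).comp e.symm.injective)
  idem a := by simp [hL.idem]

theorem apply_eq_left_iff (hL : IsIdempotentLatinSquare L) {a b : α} : L a b = a ↔ b = a :=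
  (hL.injective_row a).eq_iff' (hL.idem a)

theorem apply_eq_right_iff (hL : IsIdempotentLatinSquare L) {a b : α} : L a b = b ↔ a = b :=
  (hL.injective_col b).eq_iff' (hL.idem b)

theorem half_add (R : Type*) [CommRing R] [Invertible (2 : R)] :
    IsIdempotentLatinSquare fun a b : R => ⅟2 * (a + b) where
  injective_row a :=
    (isUnit_of_invertible (⅟2 : R)).mul_right_injective.comp (add_right_injective a)
  injective_col b :=
    (isUnit_of_invertible (⅟2 : R)).mul_right_injective.comp (add_left_injective b)
  idem a := by rw [← two_mul, invOf_mul_cancel_left]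

theorem latinProlong [DecidableEq α] (hL : IsIdempotentLatinSquare L) {σ : Equiv.Perm α}
    (hσ : ∀ a, σ a ≠ a) (htrans : Injective fun a => L a (σ a)) :
    IsIdempotentLatinSquare (latinProlong L σ) where
  injective_row := by
    have htrans' : Injective fun b => L (σ.symm b) b := by
      simpa [comp_def] using htrans.comp σ.symm.injective
    rintro (_ | a) (_ | b) (_ | b') h <;> simp only [_root_.latinProlong] at h <;>
      (try split_ifs at h) <;> simp_all [(hL.injective_row _).eq_iff, htrans'.eq_iff]
  injective_col := by
    rintro (_ | b) (_ | a) (_ | a') h <;> simp only [_root_.latinProlong] at h <;>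
      (try split_ifs at h) <;>
      simp_all [(hL.injective_col _).eq_iff, htrans.eq_iff, Equiv.symm_apply_eq]
  idem := by
    rintro (_ | a)
    · rfl
    · simp [_root_.latinProlong, (hσ a).symm, hL.idem]

end IsIdempotentLatinSquare

theorem isIdempotentLatinSquare_latinProlong_half_add (R : Type*) [CommRing R] [Nontrivial R]
    [DecidableEq R] [Invertible (2 : R)] :
    IsIdempotentLatinSquare (latinProlong (fun a b : R => ⅟2 * (a + b)) (Equiv.addRight 1)) := by
  refine (IsIdempotentLatinSquare.half_add R).latinProlong (fun a => by simp) ?_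
  intro a b h
  have hsum : a + (a + 1) = b + (b + 1) := (isUnit_of_invertible (⅟2 : R)).mul_left_cancel h
  exact (isUnit_of_invertible (2 : R)).mul_left_cancel (by linear_combination hsum)

theorem ZMod.isUnit_two {n : ℕ} (hn : Odd n) : IsUnit (2 : ZMod n) :=
  (ZMod.isUnit_iff_coprime 2 n).2 (Nat.coprime_two_left.2 hn)

theorem exists_isIdempotentLatinSquare_fin {m : ℕ} (hm : m ≠ 2) :
    ∃ L : Fin m → Fin m → Fin m, IsIdempotentLatinSquare L := by
  obtain rfl | hm0 := eq_or_ne m 0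
  · exact ⟨fun a _ => a, fun a => a.elim0, fun b => b.elim0, fun a => rfl⟩
  obtain hodd | heven := (Nat.even_or_odd m).symm
  · have : NeZero m := ⟨hm0⟩
    have := (ZMod.isUnit_two hodd).invertible
    exact ⟨_, (IsIdempotentLatinSquare.half_add (ZMod m)).equiv_conj
      (ZMod.finEquiv m).symm.toEquiv⟩
  obtain ⟨q, rfl⟩ := Nat.exists_eq_add_one_of_ne_zero hm0
  have hq : Odd q := by simpa [Nat.even_add_one] using heven
  have : NeZero q := ⟨by rintro rfl; simp at hq⟩
  have : Fact (1 < q) := ⟨by obtain ⟨k, rfl⟩ := hq; omega⟩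
  have := (ZMod.isUnit_two hq).invertible
  exact ⟨_, (isIdempotentLatinSquare_latinProlong_half_add (ZMod q)).equiv_conj
    ((Equiv.optionCongr (ZMod.finEquiv q).symm.toEquiv).trans (finSuccEquiv q).symm)⟩

section Crown

variable {m : ℕ} {k t : Fin m}

@[simp] theorem crown_adj_inl_inr : (crown m).Adj (.inl k) (.inr t) ↔ k ≠ t := Iff.rfl
@[simp] theorem crown_adj_inr_inl : (crown m).Adj (.inr k) (.inl t) ↔ k ≠ t := Iff.rfl
@[simp] theorem not_crown_adj_inl_inl : ¬(crown m).Adj (.inl k) (.inl t) := id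
@[simp] theorem not_crown_adj_inr_inr : ¬(crown m).Adj (.inr k) (.inr t) := id

def crownEdgeColoring (L : Fin m → Fin m → Fin m) : Fin m ⊕ Fin m → Fin m ⊕ Fin m → Fin m
  | .inl k, .inr t => L k t
  | .inr k, .inl t => L t k
  | .inl k, .inl _ | .inr k, .inr _ => k

theorem IsIdempotentLatinSquare.isTotalColoring_crown {L : Fin m → Fin m → Fin m}
    (hL : IsIdempotentLatinSquare L) :
    IsTotalColoring (crown m) m (Sum.elim id id) (crownEdgeColoring L) := by
  refine ⟨?_, ?_, ?_, ?_⟩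
  · rintro (k | k) (t | t) h <;> simp_all [crownEdgeColoring]
  · rintro (k | k) (t | t) h <;> simp_all
  · rintro (k | k) (t | t) (t' | t') h h' hne <;>
      simp_all [crownEdgeColoring, (hL.injective_row _).eq_iff, (hL.injective_col _).eq_iff]
  · rintro (k | k) (t | t) h <;>
      simp_all [crownEdgeColoring, hL.apply_eq_left_iff, hL.apply_eq_right_iff, eq_comm]

end Crown

theorem crown_totalColoring (m : ℕ) (hm : 3 ≤ m) :
    ∃ (cv : Fin m ⊕ Fin m → Fin m) (ce : Fin m ⊕ Fin m → Fin m ⊕ Fin m → Fin m),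
      IsTotalColoring (crown m) m cv ce ∧
      (∀ k t : Fin m, cv (Sum.inl k) = cv (Sum.inl t) ↔ k = t) ∧
      (∀ k t : Fin m, cv (Sum.inr k) = cv (Sum.inr t) ↔ k = t) ∧
      (∀ k t : Fin m, cv (Sum.inl k) = cv (Sum.inr t) ↔ k = t) := by
  obtain ⟨L, hL⟩ := exists_isIdempotentLatinSquare_fin (by omega : m ≠ 2)
  exact ⟨Sum.elim id id, crownEdgeColoring L, hL.isTotalColoring_crown, by simp, by simp, by simp⟩
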